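/- Fix an integer a ≥ 3. Let U = [2, 2, 2, a, 2] and W = [2, 2, …, 2, 3, 2, 2] where the initial block of 2's in W has length a − 1 (so W has length a + 2). With ld_j as the quotient (d(prefix before j) + d(suffix after j))/d(whole chain) for the tridiagonal discriminant d, one has ld_3(U) + ld_5(U) = 3a/(4a − 5), ld_a(W) = (a + 3)/(4a + 3), and the total ld_3(U) + ld_5(U) + ld_a(W) = 3a/(4a − 5) + (a + 3)/(4a + 3) > 1. -/

import Mathlib

/-- The tridiagonal matrix with diagonal entries given by the list `T`
and entries `-1` on the sub- and super-diagonal. -/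
def tridiagMatrix (T : List ℤ) : Matrix (Fin T.length) (Fin T.length) ℤ :=
  Matrix.of fun i j =>
    if i = j then T.get i
    else if (i : ℕ) + 1 = (j : ℕ) ∨ (j : ℕ) + 1 = (i : ℕ) then -1 else 0

/-- The discriminant of a chain `T`: the determinant of the associated tridiagonal
matrix (so the discriminant of the empty list is `1`). -/
def chainDisc (T : List ℤ) : ℤ := (tridiagMatrix T).det

/-- The log discrepancy of the `j`-th entry (1-indexed) of the chain `T`:
`ld_j(T) = (d(T_{<j}) + d(T_{>j})) / d(T)`. -/
def chainLd (T : List ℤ) (j : ℕ) : ℚ :=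
  ((chainDisc (T.take (j - 1)) : ℚ) + (chainDisc (T.drop j) : ℚ)) / (chainDisc T : ℚ)

/-!
The discriminant obeys the continuant recurrence `d(x :: y :: T) = x d(y :: T) - d(T)`
(Laplace expansion along the first row), so it grows affinely along a run of `2`'s. This gives
`d(U) = 8a - 10` and `d(W) = 4a + 3`, hence the two closed forms. The inequality holds because
the first summand exceeds `3/4` and the second exceeds `1/4`.
-/

lemma tridiagMatrix_submatrix_succ (x : ℤ) (T : List ℤ) :
    (tridiagMatrix (x :: T)).submatrix Fin.succ Fin.succ = tridiagMatrix T := by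
  ext i j
  simp [tridiagMatrix, Fin.succ_inj]

lemma tridiagMatrix_submatrix_succ_succ (x y : ℤ) (T : List ℤ) :
    (tridiagMatrix (x :: y :: T)).submatrix (Fin.succ ∘ Fin.succ) (Fin.succ ∘ Fin.succ) =
      tridiagMatrix T := by
  rw [← Matrix.submatrix_submatrix, tridiagMatrix_submatrix_succ, tridiagMatrix_submatrix_succ]

section Entries

variable (x y : ℤ) (T : List ℤ)

lemma tridiagMatrix_zero_zero : tridiagMatrix (x :: T) 0 0 = x := by
  simp [tridiagMatrix]

lemma tridiagMatrix_zero_one : tridiagMatrix (x :: y :: T) 0 1 = -1 := by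
  simp [tridiagMatrix]

lemma tridiagMatrix_one_zero : tridiagMatrix (x :: y :: T) 1 0 = -1 := by
  simp [tridiagMatrix]

lemma tridiagMatrix_zero_succ_succ (i : Fin T.length) :
    tridiagMatrix (x :: y :: T) 0 i.succ.succ = 0 := by
  simp [tridiagMatrix, Fin.ext_iff]

lemma tridiagMatrix_succ_succ_zero (i : Fin T.length) :
    tridiagMatrix (x :: y :: T) i.succ.succ 0 = 0 := by
  simp [tridiagMatrix, Fin.ext_iff]

end Entries

lemma chainDisc_nil : chainDisc [] = 1 := Matrix.det_fin_zero

lemma chainDisc_singleton (x : ℤ) : chainDisc [x] = x := by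
  simp [chainDisc, tridiagMatrix]

lemma det_tridiagMatrix_minor_zero_one (x y : ℤ) (T : List ℤ) :
    ((tridiagMatrix (x :: y :: T)).submatrix Fin.succ (Fin.succAbove 1)).det = -chainDisc T := by
  have hcol : (Fin.succAbove (1 : Fin (T.length + 2))) ∘ Fin.succ = Fin.succ ∘ Fin.succ := by
    funext j; simp [Fin.succAbove, Fin.lt_def]
  rw [Matrix.det_succ_column_zero, Fin.sum_univ_succ]
  simp only [Matrix.submatrix_apply, Fin.succ_zero_eq_one, Fin.succAbove_ne_zero_zero one_ne_zero,
    Fin.succAbove_zero, tridiagMatrix_one_zero, tridiagMatrix_succ_succ_zero,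
    Matrix.submatrix_submatrix, hcol, mul_zero, zero_mul, Finset.sum_const_zero, add_zero]
  rw [tridiagMatrix_submatrix_succ_succ]
  simp [chainDisc]

lemma chainDisc_cons_cons (x y : ℤ) (T : List ℤ) :
    chainDisc (x :: y :: T) = x * chainDisc (y :: T) - chainDisc T := by
  rw [chainDisc, Matrix.det_succ_row_zero]
  simp only [List.length_cons, Fin.sum_univ_succ, tridiagMatrix_zero_zero, Fin.succAbove_zero,
    Fin.succ_zero_eq_one, tridiagMatrix_zero_one, tridiagMatrix_zero_succ_succ, mul_zero, zero_mul,
    Finset.sum_const_zero, add_zero]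
  rw [tridiagMatrix_submatrix_succ, det_tridiagMatrix_minor_zero_one]
  simp [chainDisc, sub_eq_add_neg]

lemma chainDisc_replicate_two_append (T : List ℤ) :
    ∀ n : ℕ, chainDisc (List.replicate n 2 ++ T) =
      chainDisc T + n * (chainDisc (2 :: T) - chainDisc T)
  | 0 => by simp
  | 1 => by simp
  | n + 2 => by
    rw [List.replicate_succ, List.cons_append, List.replicate_succ, List.cons_append,
      chainDisc_cons_cons, ← List.cons_append, ← List.replicate_succ,
      chainDisc_replicate_two_append T (n + 1), chainDisc_replicate_two_append T n]
    push_cast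
    ring

lemma chainDisc_replicate_two (n : ℕ) : chainDisc (List.replicate n 2) = n + 1 := by
  simpa [chainDisc_nil, chainDisc_singleton, add_comm] using chainDisc_replicate_two_append [] n

lemma chainLd_three_add_chainLd_five (x : ℤ) :
    chainLd [2, 2, 2, x, 2] 3 + chainLd [2, 2, 2, x, 2] 5 = 3 * x / (4 * x - 5) := by
  have hx : (4 * x - 5 : ℚ) ≠ 0 := by exact_mod_cast (by omega : 4 * x - 5 ≠ 0)
  simp only [chainLd, List.take, List.drop, chainDisc_cons_cons, chainDisc_singleton, chainDisc_nil]
  push_cast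
  rw [← add_div, div_eq_div_iff (by contrapose! hx; linarith) hx]
  ring

lemma chainLd_replicate_two_append (n : ℕ) :
    chainLd (List.replicate n 2 ++ [3, 2, 2]) (n + 1) = (n + 4) / (4 * n + 7) := by
  have htake : (List.replicate n (2 : ℤ) ++ [3, 2, 2]).take n = List.replicate n 2 :=
    List.take_left' List.length_replicate
  have hdrop : (List.replicate n (2 : ℤ) ++ [3, 2, 2]).drop (n + 1) = [2, 2] := by
    simp [List.drop_append]
  rw [chainLd, Nat.add_sub_cancel, htake, hdrop, chainDisc_replicate_two,
    chainDisc_replicate_two_append]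
  norm_num [chainDisc_cons_cons, chainDisc_singleton, chainDisc_nil]
  ring

lemma one_lt_div_add_div {x : ℚ} (hx : 5 / 4 < x) :
    1 < 3 * x / (4 * x - 5) + (x + 3) / (4 * x + 3) := by
  have hU : 3 / 4 < 3 * x / (4 * x - 5) := by
    rw [lt_div_iff₀ (by linarith)]; linarith
  have hW : 1 / 4 < (x + 3) / (4 * x + 3) := by
    rw [lt_div_iff₀ (by linarith)]; linarith
  linarith

/-- **Del Pezzo criterion for the quadruple `(a, 2, 2, 2)`.**
For `a ≥ 3`, with `U = [2, 2, 2, a, 2]` and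
`W = [2, …, 2, 3, 2, 2]` (the initial block of `2`'s having length `a − 1`), one has
`ld_3(U) + ld_5(U) = 3a/(4a − 5)`, `ld_a(W) = (a + 3)/(4a + 3)`, and
`ld_3(U) + ld_5(U) + ld_a(W) > 1`. -/
theorem quadruple_a222 (a : ℕ) (ha : 3 ≤ a) :
    chainLd [2, 2, 2, (a : ℤ), 2] 3 + chainLd [2, 2, 2, (a : ℤ), 2] 5 =
        3 * (a : ℚ) / (4 * (a : ℚ) - 5) ∧
    chainLd (List.replicate (a - 1) (2 : ℤ) ++ [3, 2, 2]) a =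
        ((a : ℚ) + 3) / (4 * (a : ℚ) + 3) ∧
    1 < chainLd [2, 2, 2, (a : ℤ), 2] 3 + chainLd [2, 2, 2, (a : ℤ), 2] 5 +
        chainLd (List.replicate (a - 1) (2 : ℤ) ++ [3, 2, 2]) a := by
  have hU : chainLd [2, 2, 2, (a : ℤ), 2] 3 + chainLd [2, 2, 2, (a : ℤ), 2] 5 =
      3 * (a : ℚ) / (4 * (a : ℚ) - 5) := by
    exact_mod_cast chainLd_three_add_chainLd_five a
  have hW : chainLd (List.replicate (a - 1) (2 : ℤ) ++ [3, 2, 2]) a =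
      ((a : ℚ) + 3) / (4 * (a : ℚ) + 3) := by
    obtain ⟨n, rfl⟩ : ∃ n, a = n + 1 := ⟨a - 1, by omega⟩
    rw [Nat.add_sub_cancel, chainLd_replicate_two_append]
    push_cast
    ring
  refine ⟨hU, hW, ?_⟩
  rw [hU, hW]
  have ha' : (3 : ℚ) ≤ a := by exact_mod_cast ha
  exact one_lt_div_add_div (by linarith)
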